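/- arXiv:1508.01695 — 4 statements merged into one kernel-verified Lean document; each statement's English description precedes it below -/
import Mathlib

section
/- Let M_I = Σ_B (the between-class covariance) and let Σ_X be positive definite. Then β_j is a generalized eigenvector of M = M_I Σ_X⁻¹ M_I with respect to Σ_X with eigenvalue l_j if and only if β_j is a generalized eigenvector of Σ_B with respect to Σ_X with eigenvalue λ_j satisfying l_j = λ_j². Hence the subspace spanned by the GMMDRC directions under the common-covariance model equals the SIR subspace. -/
open Matrix


lemma symm_dot {p : ℕ} (A : Matrix (Fin p) (Fin p) ℝ) (h : A.IsHermitian)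
    (x y : Fin p → ℝ) : x ⬝ᵥ (A *ᵥ y) = (A *ᵥ x) ⬝ᵥ y := by
  rw [dotProduct_mulVec, ← vecMul_transpose,
    ← conjTranspose_eq_transpose_of_trivial, h.eq]


/-- `β` is a generalized eigenvector of `M = Σ_B Σ_X⁻¹ Σ_B` w.r.t. `Σ_X` with eigenvalue `l`
iff it is a generalized eigenvector of `Σ_B` w.r.t. `Σ_X` with eigenvalue `lam`, `l = lam²`. -/
theorem stmt3 {p : ℕ} (SB SX : Matrix (Fin p) (Fin p) ℝ)
    (hB : SB.PosSemidef) (hX : SX.PosDef)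
    (β : Fin p → ℝ) (hβ : β ≠ 0) (l : ℝ) :
    (SB * SX⁻¹ * SB) *ᵥ β = l • (SX *ᵥ β) ↔
      ∃ lam : ℝ, l = lam ^ 2 ∧ SB *ᵥ β = lam • (SX *ᵥ β) := by
  have hinv : SX⁻¹ * SX = 1 := nonsing_inv_mul SX (isUnit_iff_ne_zero.mpr hX.det_pos.ne')
  have hXinv : (SX⁻¹).PosDef := hX.inv
  constructor
  · intro h
    -- show l ≥ 0
    have hpos : 0 < β ⬝ᵥ (SX *ᵥ β) := by simpa using hX.dotProduct_mulVec_pos hβ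
    have key : β ⬝ᵥ ((SB * SX⁻¹ * SB) *ᵥ β) = (SB *ᵥ β) ⬝ᵥ (SX⁻¹ *ᵥ (SB *ᵥ β)) := by
      rw [← mulVec_mulVec, ← mulVec_mulVec, symm_dot SB hB.1]
    have hl0 : 0 ≤ l := by
      have h1 : 0 ≤ (SB *ᵥ β) ⬝ᵥ (SX⁻¹ *ᵥ (SB *ᵥ β)) := by
        simpa using hXinv.posSemidef.dotProduct_mulVec_nonneg (SB *ᵥ β)
      have h2 : (SB *ᵥ β) ⬝ᵥ (SX⁻¹ *ᵥ (SB *ᵥ β)) = l * (β ⬝ᵥ (SX *ᵥ β)) := by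
        rw [← key, h, dotProduct_smul, smul_eq_mul]
      nlinarith
    set s := Real.sqrt l with hs
    have hs2 : s ^ 2 = l := Real.sq_sqrt hl0
    refine ⟨s, hs2.symm, ?_⟩
    -- w := SX⁻¹ *ᵥ (SB *ᵥ β) - s • β
    set w : Fin p → ℝ := SX⁻¹ *ᵥ (SB *ᵥ β) - s • β with hw
    have hSXw : SX *ᵥ w = SB *ᵥ β - s • (SX *ᵥ β) := by
      rw [hw, mulVec_sub, mulVec_smul, mulVec_mulVec,
        mul_nonsing_inv SX (isUnit_iff_ne_zero.mpr hX.det_pos.ne'), one_mulVec]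
    have hSBw : SB *ᵥ w = (-s) • (SX *ᵥ w) := by
      rw [hSXw, hw, mulVec_sub, mulVec_smul, mulVec_mulVec, mulVec_mulVec,
        h, ← hs2]
      module
    have hw0 : w = 0 := by
      by_contra hwne
      have h1 : 0 ≤ w ⬝ᵥ (SB *ᵥ w) := by simpa using hB.dotProduct_mulVec_nonneg w
      have h2 : 0 < w ⬝ᵥ (SX *ᵥ w) := by simpa using hX.dotProduct_mulVec_pos hwne
      have h3 : w ⬝ᵥ (SB *ᵥ w) = -s * (w ⬝ᵥ (SX *ᵥ w)) := by
        rw [hSBw, dotProduct_smul, smul_eq_mul]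
      have hsle : s ≤ 0 := by nlinarith
      have hsge : 0 ≤ s := Real.sqrt_nonneg l
      have hseq : s = 0 := le_antisymm hsle hsge
      -- then SB *ᵥ w = 0 and w = SX⁻¹ *ᵥ (SB *ᵥ β)
      have hl : l = 0 := by rw [← hs2, hseq]; ring
      -- w = SX⁻¹ (SB β), and (SBβ) ⬝ SX⁻¹ (SBβ) = l βᵀSXβ = 0 ⇒ SBβ = 0 ⇒ w = 0
      have h2' : (SB *ᵥ β) ⬝ᵥ (SX⁻¹ *ᵥ (SB *ᵥ β)) = 0 := by
        rw [← key, h, hl]; simp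
      have hSBβ : SB *ᵥ β = 0 := by
        by_contra hne
        have := hXinv.dotProduct_mulVec_pos hne
        simp only [star_trivial] at this
        linarith [this, h2'.le]
      apply hwne
      rw [hw, hseq, hSBβ]
      simp
    have : SX *ᵥ w = 0 := by rw [hw0, mulVec_zero]
    rw [hSXw] at this
    linear_combination (norm := module) this
  · rintro ⟨lam, hl, hEig⟩
    rw [← mulVec_mulVec, ← mulVec_mulVec, hEig, mulVec_smul, mulVec_mulVec, hinv,
      one_mulVec, mulVec_smul, hEig, hl, smul_smul, sq]
end

section
/- The SAVE kernel satisfies the identity Σ_{k=1}^K ω_k (I_p − Σ_X^{−1/2} Σ_k Σ_X^{−1/2})² = Σ_X^{−1/2} (Σ_B Σ_X⁻¹ Σ_B + Σ_{k=1}^K ω_k (Σ_k − Σ_W) Σ_X⁻¹ (Σ_k − Σ_W)ᵀ) Σ_X^{−1/2}, where Σ_W = Σ_k ω_k Σ_k and Σ_X = Σ_B + Σ_W. -/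
open Matrix Finset

/-- The SAVE kernel identity:
`∑ ω_k (I - Σ_X^{-1/2} Σ_k Σ_X^{-1/2})² = Σ_X^{-1/2}(Σ_B Σ_X⁻¹ Σ_B + ∑ ω_k (Σ_k - Σ_W) Σ_X⁻¹ (Σ_k - Σ_W)ᵀ) Σ_X^{-1/2}`. -/
theorem stmt7 {p K : ℕ} (ω : Fin K → ℝ) (hω : ∀ k, 0 < ω k) (hωs : ∑ k, ω k = 1)
    (S : Fin K → Matrix (Fin p) (Fin p) ℝ) (hS : ∀ k, (S k).IsSymm)
    (SB SW SX R : Matrix (Fin p) (Fin p) ℝ)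
    (hSW : SW = ∑ k, ω k • S k) (hSB : SB.PosSemidef) (hSX : SX = SB + SW)
    (hXpd : SX.PosDef) (hR : R.PosDef) (hRR : R * R = SX) :
    ∑ k, ω k • ((1 - R⁻¹ * S k * R⁻¹) ^ 2) =
      R⁻¹ * (SB * SX⁻¹ * SB + ∑ k, ω k • ((S k - SW) * SX⁻¹ * (S k - SW)ᵀ)) * R⁻¹ := by
  have hRd : IsUnit R.det := isUnit_iff_ne_zero.mpr (ne_of_gt hR.det_pos)
  have h1 : R⁻¹ * R = 1 := nonsing_inv_mul R hRd
  have h2 : R * R⁻¹ = 1 := mul_nonsing_inv R hRd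
  have hX : SX⁻¹ = R⁻¹ * R⁻¹ := by rw [← hRR, Matrix.mul_inv_rev]
  set M : Matrix (Fin p) (Fin p) ℝ := R⁻¹ * R⁻¹ with hM
  have hSWt : SWᵀ = SW := by
    rw [hSW, Matrix.transpose_sum]
    exact Finset.sum_congr rfl fun k _ => by rw [Matrix.transpose_smul, (hS k).eq]
  have hSt : ∀ k, (S k - SW)ᵀ = S k - SW := fun k => by
    rw [Matrix.transpose_sub, (hS k).eq, hSWt]
  have hSB2 : SB = R * R - SW := by rw [hRR, hSX]; abel
  -- pull sums
  have hpull : ∀ (f : Fin K → Matrix (Fin p) (Fin p) ℝ),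
      ∑ k, ω k • (R⁻¹ * f k * R⁻¹) = R⁻¹ * (∑ k, ω k • f k) * R⁻¹ := by
    intro f
    rw [Finset.mul_sum, Finset.sum_mul]
    exact Finset.sum_congr rfl fun k _ => by rw [mul_smul_comm, smul_mul_assoc]
  set T : Matrix (Fin p) (Fin p) ℝ := ∑ k, ω k • (S k * M * S k) with hT
  have hL : ∑ k, ω k • ((1 - R⁻¹ * S k * R⁻¹) ^ 2)
      = 1 - R⁻¹ * SW * R⁻¹ - R⁻¹ * SW * R⁻¹ + R⁻¹ * T * R⁻¹ := by
    have key : ∀ k : Fin K, ω k • ((1 - R⁻¹ * S k * R⁻¹) ^ 2)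
        = ω k • (1 : Matrix (Fin p) (Fin p) ℝ) - ω k • (R⁻¹ * S k * R⁻¹)
          - ω k • (R⁻¹ * S k * R⁻¹) + ω k • (R⁻¹ * (S k * M * S k) * R⁻¹) := by
      intro k
      rw [← smul_sub, ← smul_sub, ← smul_add]
      congr 1
      simp only [hM]
      noncomm_ring
    rw [Finset.sum_congr rfl fun k _ => key k]
    rw [Finset.sum_add_distrib, Finset.sum_sub_distrib, Finset.sum_sub_distrib,
      ← Finset.sum_smul, hωs, one_smul, hpull, hpull, ← hSW, ← hT]
  -- the sum on the RHS
  have hsum : ∑ k, ω k • ((S k - SW) * M * (S k - SW)) = T - SW * M * SW := by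
    have key2 : ∀ k : Fin K, ω k • ((S k - SW) * M * (S k - SW))
        = ω k • (S k * M * S k) - ω k • (S k * (M * SW)) - ω k • ((SW * M) * S k)
          + ω k • (SW * M * SW) := by
      intro k
      rw [← smul_sub, ← smul_sub, ← smul_add]
      congr 1
      noncomm_ring
    rw [Finset.sum_congr rfl fun k _ => key2 k,
      Finset.sum_add_distrib, Finset.sum_sub_distrib, Finset.sum_sub_distrib, ← hT]
    have e1 : ∑ k, ω k • (S k * (M * SW)) = SW * (M * SW) := by
      rw [hSW, Finset.sum_mul]
      exact Finset.sum_congr rfl fun k _ => by rw [smul_mul_assoc]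
    have e2 : ∑ k, ω k • ((SW * M) * S k) = (SW * M) * SW := by
      calc ∑ k, ω k • ((SW * M) * S k) = (SW * M) * ∑ k, ω k • S k := by
            rw [Finset.mul_sum]
            exact Finset.sum_congr rfl fun k _ => (mul_smul_comm _ _ _).symm
        _ = (SW * M) * SW := by rw [← hSW]
    have e3 : ∑ k, ω k • (SW * M * SW) = SW * M * SW := by
      rw [← Finset.sum_smul, hωs, one_smul]
    rw [e1, e2, e3, ← Matrix.mul_assoc SW M SW]
    abel
  have hSBM : SB * M * SB = R * R - SW - SW + SW * M * SW := by
    have c1 : R * R * M = 1 := by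
      rw [hM, ← mul_assoc, mul_assoc R R R⁻¹, h2, mul_one, h2]
    have c2 : M * (R * R) = 1 := by
      rw [hM, mul_assoc, ← mul_assoc R⁻¹ R R, h1, one_mul, h1]
    rw [hSB2]
    calc (R * R - SW) * M * (R * R - SW)
        = (R * R * M) * (R * R) - (R * R * M) * SW - SW * (M * (R * R)) + SW * M * SW := by
          noncomm_ring
      _ = R * R - SW - SW + SW * M * SW := by rw [c1, c2]; simp only [one_mul, mul_one]
  rw [hL, hX]
  rw [Finset.sum_congr rfl fun k _ => by rw [hSt k]]
  rw [hsum, hSBM]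
  have c3 : R⁻¹ * (R * R) * R⁻¹ = 1 := by
    rw [← mul_assoc, h1, one_mul, h2]
  calc (1 : Matrix (Fin p) (Fin p) ℝ) - R⁻¹ * SW * R⁻¹ - R⁻¹ * SW * R⁻¹ + R⁻¹ * T * R⁻¹
      = R⁻¹ * (R * R) * R⁻¹ - R⁻¹ * SW * R⁻¹ - R⁻¹ * SW * R⁻¹ + R⁻¹ * T * R⁻¹ := by rw [c3]
    _ = R⁻¹ * (R * R - SW - SW + SW * M * SW + (T - SW * M * SW)) * R⁻¹ := by noncomm_ring
end

section
/- With M_SAVE = Σ_X^{−1/2} M Σ_X^{−1/2} where M = M_I Σ_X⁻¹ M_I + M_II (M_I = Σ_B, M_II = Σ_k ω_k (Σ_k − Σ_W) Σ_X⁻¹ (Σ_k − Σ_W)ᵀ), the eigenvectors v of M_SAVE correspond bijectively to generalized eigenvectors β = Σ_X^{−1/2} v of M with respect to Σ_X, with the same eigenvalues. Hence the SAVE subspace equals the GMMDRC subspace under the VVV model. -/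
open Matrix

/-- Eigenvectors `v` of `M_SAVE = Σ_X^{-1/2} M Σ_X^{-1/2}` correspond bijectively to
generalized eigenvectors `β = Σ_X^{-1/2} v` of `M` w.r.t. `Σ_X`, with the same eigenvalues. -/
theorem stmt8 {p : ℕ} (M SX R : Matrix (Fin p) (Fin p) ℝ)
    (hM : M.PosSemidef) (hX : SX.PosDef) (hR : R.PosDef) (hRR : R * R = SX)
    (v : Fin p → ℝ) (hv : v ≠ 0) (lam : ℝ) :
    ((R⁻¹ * M * R⁻¹) *ᵥ v = lam • v ↔
      M *ᵥ (R⁻¹ *ᵥ v) = lam • (SX *ᵥ (R⁻¹ *ᵥ v))) ∧ R⁻¹ *ᵥ v ≠ 0 := by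
  have hdet : IsUnit R.det := isUnit_iff_ne_zero.2 hR.det_pos.ne'
  have h1 : R * R⁻¹ = 1 := mul_nonsing_inv R hdet
  have h2 : R⁻¹ * R = 1 := nonsing_inv_mul R hdet
  have hSX : SX *ᵥ (R⁻¹ *ᵥ v) = R *ᵥ v := by
    rw [mulVec_mulVec, ← hRR, Matrix.mul_assoc, h1, Matrix.mul_one]
  constructor
  · rw [hSX]
    constructor
    · intro h
      have := congrArg (R *ᵥ ·) h
      simp only [mulVec_mulVec, mulVec_smul] at this ⊢
      rw [← Matrix.mul_assoc, ← Matrix.mul_assoc, h1, Matrix.one_mul] at this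
      exact this
    · intro h
      have := congrArg (R⁻¹ *ᵥ ·) h
      simp only [mulVec_mulVec, mulVec_smul] at this ⊢
      rw [← Matrix.mul_assoc, h2, Matrix.one_mulVec] at this
      exact this
  · intro h
    apply hv
    have := congrArg (R *ᵥ ·) h
    simp only [mulVec_mulVec, h1, one_mulVec, mulVec_zero] at this
    exact this
end

section
/- If a finite mixture with component means μ_{gk}, component covariances Σ_{gk}, and weights ω_{gk} satisfies μ_{gk} = μ for all (g,k) and Σ_{gk} = Σ̄ for all (g,k), then the kernel matrix M = M_I Σ_X⁻¹ M_I + M_II is zero; conversely if M = 0 and Σ_X is positive definite then M_I = 0 and M_II = 0, i.e., all component means equal μ and (after conjugating by Σ_X^{−1/2}) all terms (Σ_{gk} − Σ̄)Σ_X⁻¹(Σ_{gk} − Σ̄)ᵀ vanish, so Σ_{gk} = Σ̄ for all (g,k). -/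
open Matrix Finset

private lemma quad_sandwich {p : ℕ} (A B : Matrix (Fin p) (Fin p) ℝ) (x : Fin p → ℝ) :
    x ⬝ᵥ ((A * B * Aᵀ) *ᵥ x) = (Aᵀ *ᵥ x) ⬝ᵥ (B *ᵥ (Aᵀ *ᵥ x)) := by
  rw [← mulVec_mulVec, ← mulVec_mulVec, dotProduct_mulVec, mulVec_transpose]

private lemma sandwich_nonneg {p : ℕ} (A B : Matrix (Fin p) (Fin p) ℝ) (hB : B.PosDef)
    (x : Fin p → ℝ) : 0 ≤ x ⬝ᵥ ((A * B * Aᵀ) *ᵥ x) := by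
  rw [quad_sandwich]
  have := hB.posSemidef.dotProduct_mulVec_nonneg (Aᵀ *ᵥ x)
  simpa using this

private lemma sandwich_zero {p : ℕ} (A B : Matrix (Fin p) (Fin p) ℝ) (hB : B.PosDef)
    (x : Fin p → ℝ) (h : x ⬝ᵥ ((A * B * Aᵀ) *ᵥ x) = 0) : Aᵀ *ᵥ x = 0 := by
  rw [quad_sandwich] at h
  by_contra hne
  have hpos : 0 < (Aᵀ *ᵥ x) ⬝ᵥ (B *ᵥ (Aᵀ *ᵥ x)) := by
    simpa using hB.dotProduct_mulVec_pos (x := Aᵀ *ᵥ x) hne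
  linarith

private lemma eq_zero_of_mulVec {p : ℕ} (A : Matrix (Fin p) (Fin p) ℝ)
    (h : ∀ x, A *ᵥ x = 0) : A = 0 := by
  ext i j
  have := congrFun (h (Pi.single j 1)) i
  simpa [mulVec_single] using this

private lemma quad_sum {p : ℕ} {ι : Type*} (s : Finset ι) (c : ι → ℝ)
    (A : ι → Matrix (Fin p) (Fin p) ℝ) (x : Fin p → ℝ) :
    x ⬝ᵥ ((∑ i ∈ s, c i • A i) *ᵥ x) = ∑ i ∈ s, c i * (x ⬝ᵥ (A i *ᵥ x)) := by
  induction s using Finset.cons_induction with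
  | empty => simp
  | cons i s hi ih =>
      simp [Finset.sum_cons, add_mulVec, dotProduct_add, smul_mulVec,
        dotProduct_smul, ih]

private lemma quad_vecMulVec {p : ℕ} (v x : Fin p → ℝ) :
    x ⬝ᵥ (vecMulVec v v *ᵥ x) = (v ⬝ᵥ x) ^ 2 := by
  calc x ⬝ᵥ (vecMulVec v v *ᵥ x) = ∑ i, ∑ j, (v i * x i) * (v j * x j) := by
        simp only [mulVec, dotProduct, vecMulVec_apply]
        refine Finset.sum_congr rfl fun i _ => ?_
        rw [Finset.mul_sum]
        exact Finset.sum_congr rfl fun j _ => by ring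
    _ = (∑ i, v i * x i) * (∑ j, v j * x j) := by rw [← Finset.sum_mul_sum]
    _ = (v ⬝ᵥ x) ^ 2 := by rw [sq]; rfl

/-- The kernel `M = M_I Σ_X⁻¹ M_I + M_II` vanishes iff all component means equal `μ`
and all component covariances equal `Σ̄`. -/
theorem stmt12 {p : ℕ} {ι : Type*} [Fintype ι] (ω : ι → ℝ) (hω : ∀ i, 0 < ω i)
    (hωs : ∑ i, ω i = 1) (μv : ι → (Fin p → ℝ)) (μbar : Fin p → ℝ)
    (hμ : μbar = ∑ i, ω i • μv i)
    (S : ι → Matrix (Fin p) (Fin p) ℝ) (hS : ∀ i, (S i).IsSymm)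
    (Sbar : Matrix (Fin p) (Fin p) ℝ) (hSbar : Sbar = ∑ i, ω i • S i)
    (SX : Matrix (Fin p) (Fin p) ℝ) (hX : SX.PosDef)
    (MI MII M : Matrix (Fin p) (Fin p) ℝ)
    (hMI : MI = ∑ i, ω i • vecMulVec (μv i - μbar) (μv i - μbar))
    (hMII : MII = ∑ i, ω i • ((S i - Sbar) * SX⁻¹ * (S i - Sbar)ᵀ))
    (hM : M = MI * SX⁻¹ * MI + MII) :
    M = 0 ↔ (∀ i, μv i = μbar) ∧ ∀ i, S i = Sbar := by
  have hXinv : SX⁻¹.PosDef := hX.inv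
  constructor
  · intro hM0
    -- MI is symmetric
    have hMIsymm : MIᵀ = MI := by
      rw [hMI]
      ext a b
      simp [Matrix.sum_apply, vecMulVec_apply, mul_comm]
    -- quadratic forms
    have hquad : ∀ x : Fin p → ℝ,
        x ⬝ᵥ ((MI * SX⁻¹ * MIᵀ) *ᵥ x)
          + ∑ i, ω i * (x ⬝ᵥ (((S i - Sbar) * SX⁻¹ * (S i - Sbar)ᵀ) *ᵥ x)) = 0 := by
      intro x
      have h0 : x ⬝ᵥ (M *ᵥ x) = 0 := by rw [hM0]; simp
      rw [hM, hMII, add_mulVec, dotProduct_add, quad_sum] at h0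
      rw [hMIsymm]
      exact h0
    have hterms : ∀ x : Fin p → ℝ,
        x ⬝ᵥ ((MI * SX⁻¹ * MIᵀ) *ᵥ x) = 0 ∧
        ∀ i, x ⬝ᵥ (((S i - Sbar) * SX⁻¹ * (S i - Sbar)ᵀ) *ᵥ x) = 0 := by
      intro x
      have h1 := sandwich_nonneg MI SX⁻¹ hXinv x
      have h2 : ∀ i ∈ (Finset.univ : Finset ι),
          0 ≤ ω i * (x ⬝ᵥ (((S i - Sbar) * SX⁻¹ * (S i - Sbar)ᵀ) *ᵥ x)) := fun i _ =>
        mul_nonneg (hω i).le (sandwich_nonneg _ _ hXinv x)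
      have hsumnn : 0 ≤ ∑ i, ω i * (x ⬝ᵥ (((S i - Sbar) * SX⁻¹ * (S i - Sbar)ᵀ) *ᵥ x)) :=
        Finset.sum_nonneg h2
      have hq := hquad x
      have hMIz : x ⬝ᵥ ((MI * SX⁻¹ * MIᵀ) *ᵥ x) = 0 := by linarith
      have hsum0 : ∑ i, ω i * (x ⬝ᵥ (((S i - Sbar) * SX⁻¹ * (S i - Sbar)ᵀ) *ᵥ x)) = 0 := by
        linarith
      refine ⟨hMIz, fun i => ?_⟩
      have := (Finset.sum_eq_zero_iff_of_nonneg h2).mp hsum0 i (Finset.mem_univ i)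
      have hωi := (hω i).ne'
      exact (mul_eq_zero.mp this).resolve_left hωi
    -- MI = 0
    have hMI0 : MI = 0 := by
      have : MIᵀ = 0 := eq_zero_of_mulVec _ fun x =>
        sandwich_zero MI SX⁻¹ hXinv x (hterms x).1
      rw [← hMIsymm, this]
    -- each S i = Sbar
    have hScov : ∀ i, S i = Sbar := by
      intro i
      have hA : (S i - Sbar)ᵀ = 0 := eq_zero_of_mulVec _ fun x =>
        sandwich_zero (S i - Sbar) SX⁻¹ hXinv x ((hterms x).2 i)
      have h0 : S i - Sbar = 0 := by
        have := congrArg Matrix.transpose hA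
        simpa using this
      exact sub_eq_zero.mp h0
    -- means: from MI = 0 derive each μv i = μbar
    have hmeans : ∀ i, μv i = μbar := by
      intro i
      have hq0 : ∀ x : Fin p → ℝ, ∑ j, ω j * ((μv j - μbar) ⬝ᵥ x) ^ 2 = 0 := by
        intro x
        have h0 : x ⬝ᵥ (MI *ᵥ x) = 0 := by rw [hMI0]; simp
        rw [hMI, quad_sum] at h0
        simpa [quad_vecMulVec] using h0
      have hvz : ∀ x : Fin p → ℝ, (μv i - μbar) ⬝ᵥ x = 0 := by
        intro x
        have h2 : ∀ j ∈ (Finset.univ : Finset ι),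
            0 ≤ ω j * ((μv j - μbar) ⬝ᵥ x) ^ 2 := fun j _ =>
          mul_nonneg (hω j).le (sq_nonneg _)
        have := (Finset.sum_eq_zero_iff_of_nonneg h2).mp (hq0 x) i (Finset.mem_univ i)
        have hωi := (hω i).ne'
        have hsq := (mul_eq_zero.mp this).resolve_left hωi
        exact pow_eq_zero_iff (by norm_num) |>.mp hsq
      funext j
      have := hvz (Pi.single j 1)
      have h0 : (μv i - μbar) j = 0 := by
        simpa [dotProduct, Pi.single_apply, Finset.sum_ite_eq] using this
      have := sub_eq_zero.mp (by simpa using h0)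
      simpa using this
    exact ⟨hmeans, hScov⟩
  · rintro ⟨hm, hc⟩
    have h1 : MI = 0 := by
      rw [hMI]
      apply Finset.sum_eq_zero
      intro i _
      rw [hm i]
      ext a b
      simp [vecMulVec_apply]
    have h2 : MII = 0 := by
      rw [hMII]
      apply Finset.sum_eq_zero
      intro i _
      rw [hc i]
      simp
    rw [hM, h1, h2]
    simp
end
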